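/- arXiv:1503.01987 — 4 statements merged into one kernel-verified Lean document; each statement's English description precedes it below -/
import Mathlib

section
/- Every finite perfect group is normally generated by a single element; that is, if G is a finite group with G = [G,G], then there exists g ∈ G such that the smallest normal subgroup of G containing g is all of G. -/
/-!
Induct on `|G|`. Pick a minimal normal subgroup `N`; by induction the perfect quotient `G ⧸ N`
is normally generated by the image of some `g`, so `⟨⟨g⟩⟩ N = G` where `⟨⟨g⟩⟩` is the normal
closure. If `⟨⟨g⟩⟩ ∩ N ≠ 1`, minimality puts `N` inside `⟨⟨g⟩⟩`. Otherwise `g` centralizes `N`,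
and `N` is nonabelian because `G / ⟨⟨g⟩⟩` is a perfect image of `N`. For `m, y ∈ N` with
`[m, y] ≠ 1` the normal closure of `g m` contains `[g m, y] = [m, y] ∈ N`, hence all of `N` by
minimality, hence `g`, hence `G`.
-/

open Subgroup
open scoped commutatorElement

section

variable {G G' : Type*} [Group G] [Group G']

abbrev Subgroup.IsMinimalNormal (N : Subgroup G) : Prop :=
  Minimal (fun M : Subgroup G => M.Normal ∧ M ≠ ⊥) N

theorem Subgroup.exists_isMinimalNormal [Finite G] [Nontrivial G] :
    ∃ N : Subgroup G, N.IsMinimalNormal :=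
  exists_minimal_of_wellFoundedLT _ ⟨⊤, inferInstance, top_ne_bot⟩

theorem Subgroup.IsMinimalNormal.le_of_inf_ne_bot {N : Subgroup G} (hN : N.IsMinimalNormal)
    {K : Subgroup G} [K.Normal] (hKN : K ⊓ N ≠ ⊥) : N ≤ K :=
  have := hN.prop.1
  (hN.eq_of_le ⟨normal_inf_normal K N, hKN⟩ inf_le_right).ge.trans inf_le_left

theorem commutator_eq_top_of_surjective {f : G →* G'} (hf : Function.Surjective f)
    (hperf : commutator G = ⊤) : commutator G' = ⊤ := by
  rw [commutator_def, ← map_top_of_surjective f hf, ← map_commutator, ← commutator_def, hperf]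

theorem Subgroup.map_eq_top_iff_sup_ker_eq_top {f : G →* G'} (hf : Function.Surjective f)
    (H : Subgroup G) : H.map f = ⊤ ↔ H ⊔ f.ker = ⊤ := by
  rw [← comap_map_eq, ← comap_top f]
  exact ⟨fun h => by rw [h], fun h => by
    rw [← map_comap_eq_self_of_surjective hf (H.map f), h, map_comap_eq_self_of_surjective hf]⟩

theorem Subgroup.card_quotient_lt_card [Finite G] {N : Subgroup G} (hN : N ≠ ⊥) :
    Nat.card (G ⧸ N) < Nat.card G := by
  rw [N.card_eq_card_quotient_mul_card_subgroup]
  exact lt_mul_of_one_lt_right Nat.card_pos ((one_lt_card_iff_ne_bot N).2 hN)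

theorem commutator_sup_eq_top_of_sup_eq_top (hperf : commutator G = ⊤) {H N : Subgroup G}
    [H.Normal] (hHN : H ⊔ N = ⊤) : ⁅N, N⁆ ⊔ H = ⊤ := by
  have hsurj := QuotientGroup.mk'_surjective H
  have hN : N.map (QuotientGroup.mk' H) = ⊤ := by
    rw [map_eq_top_iff_sup_ker_eq_top hsurj, QuotientGroup.ker_mk', sup_comm, hHN]
  rw [← QuotientGroup.ker_mk' H, ← map_eq_top_iff_sup_ker_eq_top hsurj, map_commutator, hN,
    ← commutator_def, commutator_eq_top_of_surjective hsurj hperf]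

theorem commutatorElement_mul_left_of_commute {g m y : G} (hgy : Commute g y)
    (hgmy : Commute g ⁅m, y⁆) : ⁅g * m, y⁆ = ⁅m, y⁆ := by
  rw [commutatorElement_mul_left_eq_conj_mul, hgmy.eq,
    commutatorElement_eq_one_iff_commute.2 hgy, mul_inv_cancel_right, mul_one]

theorem normalClosure_mul_eq_top {N : Subgroup G} (hN : N.IsMinimalNormal)
    {g m y : G} (hg : ∀ x ∈ N, Commute g x) (hgN : normalClosure {g} ⊔ N = ⊤) (hm : m ∈ N)
    (hy : y ∈ N) (hmy : ⁅m, y⁆ ≠ 1) : normalClosure {g * m} = ⊤ := by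
  have := hN.prop.1
  set K := normalClosure ({g * m} : Set G)
  have hgmK : g * m ∈ K := subset_normalClosure rfl
  have hmyN : ⁅m, y⁆ ∈ N := commutator_le_right N N (commutator_mem_commutator hm hy)
  have hmyKN : ⁅m, y⁆ ∈ K ⊓ N := by
    rw [← commutatorElement_mul_left_of_commute (hg y hy) (hg _ hmyN)]
    exact commutator_le_inf K N (commutator_mem_commutator hgmK hy)
  have hKN : K ⊓ N ≠ ⊥ := fun h => hmy (mem_bot.1 (h ▸ hmyKN))
  have hNK : N ≤ K := hN.le_of_inf_ne_bot hKN
  have hgK : g ∈ K := by simpa using K.mul_mem hgmK (K.inv_mem (hNK hm))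
  rw [eq_top_iff, ← hgN]
  exact sup_le (normalClosure_le_normal (Set.singleton_subset_iff.2 hgK)) hNK

theorem exists_normalClosure_eq_top_of_sup_eq_top (hperf : commutator G = ⊤) {N : Subgroup G}
    (hN : N.IsMinimalNormal) {g : G} (hgN : normalClosure {g} ⊔ N = ⊤) : ∃ x : G, normalClosure {x} = ⊤ := by
  set H := normalClosure ({g} : Set G)
  by_cases hHN : H ⊓ N = ⊥
  · have hg (x) (hx : x ∈ N) : Commute g x := commute_of_normal_of_disjoint H N
      normalClosure_normal hN.prop.1 (disjoint_iff.2 hHN) g x (subset_normalClosure rfl) hx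
    by_cases habel : ⁅N, N⁆ = ⊥
    · refine ⟨g, ?_⟩
      simpa [habel] using commutator_sup_eq_top_of_sup_eq_top hperf hgN
    · obtain ⟨m, hm, y, hy, hmy⟩ : ∃ m ∈ N, ∃ y ∈ N, ⁅m, y⁆ ≠ 1 := by
        by_contra! hab
        exact habel (eq_bot_iff.2 (commutator_le.2 fun m hm y hy => mem_bot.2 (hab m hm y hy)))
      exact ⟨g * m, normalClosure_mul_eq_top hN hg hgN hm hy hmy⟩
  · exact ⟨g, by rwa [sup_eq_left.2 (hN.le_of_inf_ne_bot hHN)] at hgN⟩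

end

/-- Every finite perfect group is normally generated by a single element. -/
theorem finite_perfect_normally_generated_by_one
    (G : Type*) [Group G] [Finite G] (hperf : commutator G = ⊤) :
    ∃ g : G, Subgroup.normalClosure {g} = ⊤ := by
  induction h : Nat.card G using Nat.strong_induction_on generalizing G with
  | _ n ih =>
    rcases subsingleton_or_nontrivial G with hG | hG
    · exact ⟨1, Subsingleton.elim _ _⟩
    obtain ⟨N, hN⟩ := exists_isMinimalNormal (G := G)
    have := hN.prop.1
    have hsurj := QuotientGroup.mk'_surjective N
    obtain ⟨q, hq⟩ := ih _ (h ▸ card_quotient_lt_card hN.prop.2) (G ⧸ N)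
      (commutator_eq_top_of_surjective hsurj hperf) rfl
    obtain ⟨g, rfl⟩ := hsurj q
    have hgN : normalClosure {g} ⊔ N = ⊤ := by
      rwa [← QuotientGroup.ker_mk' N, ← map_eq_top_iff_sup_ker_eq_top hsurj,
        map_normalClosure _ _ hsurj, Set.image_singleton]
    exact exists_normalClosure_eq_top_of_sup_eq_top hperf hN hgN
end

section
/- Let G be a group with a finite presentation P = ⟨x_1,…,x_n | r_1,…,r_m⟩ and let P' = ⟨x_1,…,x_{n'} | r_1,…,r_{m'}⟩ (n' ≤ n, m' ≤ m) be a sub-presentation, where the words r_1,…,r_{m'} involve only x_1,…,x_{n'}. Let G' be the group presented by P'. Then for any finite presentation P'' = ⟨y_1,…,y_u | s_1,…,s_v⟩ of G', the group G admits a finite presentation with u + (n − n') generators and v + (m − m') relators. -/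
namespace SubpresAux

lemma mk_rel_eq_one {α : Type*} {rels : Set (FreeGroup α)} {x : FreeGroup α} (h : x ∈ rels) :
    PresentedGroup.mk rels x = 1 :=
  (QuotientGroup.eq_one_iff x).mpr (Subgroup.subset_normalClosure h)

lemma mk_of {α : Type*} (rels : Set (FreeGroup α)) (x : α) :
    PresentedGroup.mk rels (FreeGroup.of x) = PresentedGroup.of x := rfl

section

variable {n m n' m' u v : ℕ}

/-- a chosen word in the `y` generators representing `φ(xᵢ)`. -/
noncomputable def wi (hn : n' ≤ n) (hm : m' ≤ m)
    (r : Fin m → FreeGroup (Fin n)) (r' : Fin m' → FreeGroup (Fin n'))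
    (hsub : ∀ j : Fin m', FreeGroup.map (Fin.castLE hn) (r' j) = r (Fin.castLE hm j))
    (s : Fin v → FreeGroup (Fin u))
    (φ : PresentedGroup (Set.range r') ≃* PresentedGroup (Set.range s)) (i : Fin n') : FreeGroup (Fin u) :=
  (PresentedGroup.mk_surjective (Set.range s) (φ (PresentedGroup.of i))).choose

lemma wi_spec (hn : n' ≤ n) (hm : m' ≤ m)
    (r : Fin m → FreeGroup (Fin n)) (r' : Fin m' → FreeGroup (Fin n'))
    (hsub : ∀ j : Fin m', FreeGroup.map (Fin.castLE hn) (r' j) = r (Fin.castLE hm j))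
    (s : Fin v → FreeGroup (Fin u))
    (φ : PresentedGroup (Set.range r') ≃* PresentedGroup (Set.range s)) (i : Fin n') :
    PresentedGroup.mk (Set.range s) (wi hn hm r r' hsub s φ i) = φ (PresentedGroup.of i) :=
  (PresentedGroup.mk_surjective (Set.range s) (φ (PresentedGroup.of i))).choose_spec

/-- rewrite a word in the `x` generators as a word in the new generators. -/
noncomputable def f (hn : n' ≤ n) (hm : m' ≤ m)
    (r : Fin m → FreeGroup (Fin n)) (r' : Fin m' → FreeGroup (Fin n'))
    (hsub : ∀ j : Fin m', FreeGroup.map (Fin.castLE hn) (r' j) = r (Fin.castLE hm j))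
    (s : Fin v → FreeGroup (Fin u))
    (φ : PresentedGroup (Set.range r') ≃* PresentedGroup (Set.range s)) : FreeGroup (Fin n) →* FreeGroup (Fin (u + (n - n'))) :=
  FreeGroup.lift fun i =>
    if h : (i : ℕ) < n' then FreeGroup.map (Fin.castAdd (n - n')) (wi hn hm r r' hsub s φ ⟨i, h⟩)
    else FreeGroup.of (Fin.natAdd u ⟨(i : ℕ) - n', by have := i.isLt; omega⟩)

/-- the new relators. -/
noncomputable def t (hn : n' ≤ n) (hm : m' ≤ m)
    (r : Fin m → FreeGroup (Fin n)) (r' : Fin m' → FreeGroup (Fin n'))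
    (hsub : ∀ j : Fin m', FreeGroup.map (Fin.castLE hn) (r' j) = r (Fin.castLE hm j))
    (s : Fin v → FreeGroup (Fin u))
    (φ : PresentedGroup (Set.range r') ≃* PresentedGroup (Set.range s)) : Fin (v + (m - m')) → FreeGroup (Fin (u + (n - n'))) := fun j =>
  if h : (j : ℕ) < v then FreeGroup.map (Fin.castAdd (n - n')) (s ⟨j, h⟩)
  else f hn hm r r' hsub s φ (r ⟨m' + ((j : ℕ) - v), by have := j.isLt; omega⟩)

noncomputable def χ (hn : n' ≤ n) (hm : m' ≤ m)
    (r : Fin m → FreeGroup (Fin n)) (r' : Fin m' → FreeGroup (Fin n'))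
    (hsub : ∀ j : Fin m', FreeGroup.map (Fin.castLE hn) (r' j) = r (Fin.castLE hm j))
    (s : Fin v → FreeGroup (Fin u))
    (φ : PresentedGroup (Set.range r') ≃* PresentedGroup (Set.range s)) :
    PresentedGroup (Set.range s) →* PresentedGroup (Set.range (t hn hm r r' hsub s φ)) :=
  PresentedGroup.toGroup (f := fun k => PresentedGroup.of (Fin.castAdd (n - n') k)) (by
    rintro _ ⟨j, rfl⟩
    have h1 : FreeGroup.lift (fun k => (PresentedGroup.of (Fin.castAdd (n - n') k) :
        PresentedGroup (Set.range (t hn hm r r' hsub s φ)))) =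
        (PresentedGroup.mk _).comp (FreeGroup.map (Fin.castAdd (n - n'))) :=
      FreeGroup.ext_hom _ _ fun a => by simp [mk_of]
    rw [h1]
    apply mk_rel_eq_one
    refine ⟨⟨(j : ℕ), by omega⟩, ?_⟩
    simp only [t, MonoidHom.comp_apply]
    rw [dif_pos j.isLt])

lemma chi_mk (hn : n' ≤ n) (hm : m' ≤ m)
    (r : Fin m → FreeGroup (Fin n)) (r' : Fin m' → FreeGroup (Fin n'))
    (hsub : ∀ j : Fin m', FreeGroup.map (Fin.castLE hn) (r' j) = r (Fin.castLE hm j))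
    (s : Fin v → FreeGroup (Fin u))
    (φ : PresentedGroup (Set.range r') ≃* PresentedGroup (Set.range s)) (x : FreeGroup (Fin u)) :
    χ hn hm r r' hsub s φ (PresentedGroup.mk _ x) =
      PresentedGroup.mk _ (FreeGroup.map (Fin.castAdd (n - n')) x) := by
  have h1 : (χ hn hm r r' hsub s φ).comp (PresentedGroup.mk _) =
      (PresentedGroup.mk _).comp (FreeGroup.map (Fin.castAdd (n - n'))) :=
    FreeGroup.ext_hom _ _ fun a => by
      simp [mk_of, χ, PresentedGroup.toGroup.of]
  exact DFunLike.congr_fun h1 x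

noncomputable def ι (hn : n' ≤ n) (hm : m' ≤ m)
    (r : Fin m → FreeGroup (Fin n)) (r' : Fin m' → FreeGroup (Fin n'))
    (hsub : ∀ j : Fin m', FreeGroup.map (Fin.castLE hn) (r' j) = r (Fin.castLE hm j))
    (s : Fin v → FreeGroup (Fin u))
    (φ : PresentedGroup (Set.range r') ≃* PresentedGroup (Set.range s)) : PresentedGroup (Set.range r') →* PresentedGroup (Set.range r) :=
  PresentedGroup.toGroup (f := fun i => PresentedGroup.of (Fin.castLE hn i)) (by
    rintro _ ⟨j, rfl⟩
    have h1 : FreeGroup.lift (fun i => (PresentedGroup.of (Fin.castLE hn i) :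
        PresentedGroup (Set.range r))) =
        (PresentedGroup.mk _).comp (FreeGroup.map (Fin.castLE hn)) :=
      FreeGroup.ext_hom _ _ fun a => by simp [mk_of]
    rw [h1, MonoidHom.comp_apply, hsub j]
    exact mk_rel_eq_one ⟨_, rfl⟩)

lemma key1 (hn : n' ≤ n) (hm : m' ≤ m)
    (r : Fin m → FreeGroup (Fin n)) (r' : Fin m' → FreeGroup (Fin n'))
    (hsub : ∀ j : Fin m', FreeGroup.map (Fin.castLE hn) (r' j) = r (Fin.castLE hm j))
    (s : Fin v → FreeGroup (Fin u))
    (φ : PresentedGroup (Set.range r') ≃* PresentedGroup (Set.range s)) : (PresentedGroup.mk (Set.range (t hn hm r r' hsub s φ))).comp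
      ((f hn hm r r' hsub s φ).comp (FreeGroup.map (Fin.castLE hn))) =
    (χ hn hm r r' hsub s φ).comp (φ.toMonoidHom.comp (PresentedGroup.mk (Set.range r'))) := by
  refine FreeGroup.ext_hom _ _ fun a => ?_
  have hlt : ((Fin.castLE hn a : Fin n) : ℕ) < n' := a.isLt
  simp only [MonoidHom.comp_apply, FreeGroup.map.of, f, FreeGroup.lift_apply_of]
  rw [dif_pos hlt]
  have h2 : (⟨((Fin.castLE hn a : Fin n) : ℕ), hlt⟩ : Fin n') = a := rfl
  rw [h2, mk_of, MulEquiv.coe_toMonoidHom, ← wi_spec hn hm r r' hsub s φ a, chi_mk hn hm r r' hsub s φ]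

noncomputable def Φ (hn : n' ≤ n) (hm : m' ≤ m)
    (r : Fin m → FreeGroup (Fin n)) (r' : Fin m' → FreeGroup (Fin n'))
    (hsub : ∀ j : Fin m', FreeGroup.map (Fin.castLE hn) (r' j) = r (Fin.castLE hm j))
    (s : Fin v → FreeGroup (Fin u))
    (φ : PresentedGroup (Set.range r') ≃* PresentedGroup (Set.range s)) :
    PresentedGroup (Set.range r) →* PresentedGroup (Set.range (t hn hm r r' hsub s φ)) :=
  PresentedGroup.toGroup
    (f := fun i => PresentedGroup.mk _ (f hn hm r r' hsub s φ (FreeGroup.of i))) (by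
    rintro _ ⟨j, rfl⟩
    have h1 : FreeGroup.lift (fun i =>
        (PresentedGroup.mk (Set.range (t hn hm r r' hsub s φ)) (f hn hm r r' hsub s φ (FreeGroup.of i)))) =
        (PresentedGroup.mk _).comp (f hn hm r r' hsub s φ) :=
      FreeGroup.ext_hom _ _ fun a => by simp
    rw [h1, MonoidHom.comp_apply]
    by_cases h : (j : ℕ) < m'
    · have hj : r j = FreeGroup.map (Fin.castLE hn) (r' ⟨(j : ℕ), h⟩) :=
        (hsub ⟨(j : ℕ), h⟩).symm
      rw [hj]
      have h3 := DFunLike.congr_fun (key1 hn hm r r' hsub s φ) (r' ⟨(j : ℕ), h⟩)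
      simp only [MonoidHom.comp_apply] at h3
      rw [h3, mk_rel_eq_one (Set.mem_range_self _), map_one, map_one]
    · apply mk_rel_eq_one
      refine ⟨⟨v + ((j : ℕ) - m'), by have := j.isLt; omega⟩, ?_⟩
      simp only [t]
      rw [dif_neg (by omega)]
      congr 1
      exact congrArg r (Fin.ext (show m' + (v + ((j : ℕ) - m') - v) = (j : ℕ) by omega)))

lemma phi_mk (hn : n' ≤ n) (hm : m' ≤ m)
    (r : Fin m → FreeGroup (Fin n)) (r' : Fin m' → FreeGroup (Fin n'))
    (hsub : ∀ j : Fin m', FreeGroup.map (Fin.castLE hn) (r' j) = r (Fin.castLE hm j))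
    (s : Fin v → FreeGroup (Fin u))
    (φ : PresentedGroup (Set.range r') ≃* PresentedGroup (Set.range s)) (x : FreeGroup (Fin n)) :
    Φ hn hm r r' hsub s φ (PresentedGroup.mk _ x) =
      PresentedGroup.mk _ (f hn hm r r' hsub s φ x) := by
  have h1 : (Φ hn hm r r' hsub s φ).comp (PresentedGroup.mk _) =
      (PresentedGroup.mk _).comp (f hn hm r r' hsub s φ) :=
    FreeGroup.ext_hom _ _ fun a => by
      simp [mk_of, Φ, PresentedGroup.toGroup.of]
  exact DFunLike.congr_fun h1 x

noncomputable def g0 (hn : n' ≤ n) (hm : m' ≤ m)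
    (r : Fin m → FreeGroup (Fin n)) (r' : Fin m' → FreeGroup (Fin n'))
    (hsub : ∀ j : Fin m', FreeGroup.map (Fin.castLE hn) (r' j) = r (Fin.castLE hm j))
    (s : Fin v → FreeGroup (Fin u))
    (φ : PresentedGroup (Set.range r') ≃* PresentedGroup (Set.range s)) : Fin (u + (n - n')) → PresentedGroup (Set.range r) := fun a =>
  if h : (a : ℕ) < u then ι hn hm r r' hsub s φ (φ.symm (PresentedGroup.of ⟨(a : ℕ), h⟩))
  else PresentedGroup.of ⟨n' + ((a : ℕ) - u), by have := a.isLt; omega⟩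

lemma key2a (hn : n' ≤ n) (hm : m' ≤ m)
    (r : Fin m → FreeGroup (Fin n)) (r' : Fin m' → FreeGroup (Fin n'))
    (hsub : ∀ j : Fin m', FreeGroup.map (Fin.castLE hn) (r' j) = r (Fin.castLE hm j))
    (s : Fin v → FreeGroup (Fin u))
    (φ : PresentedGroup (Set.range r') ≃* PresentedGroup (Set.range s)) : (FreeGroup.lift (g0 hn hm r r' hsub s φ)).comp
      (FreeGroup.map (Fin.castAdd (n - n'))) =
    (ι hn hm r r' hsub s φ).comp (φ.symm.toMonoidHom.comp (PresentedGroup.mk (Set.range s))) := by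
  refine FreeGroup.ext_hom _ _ fun a => ?_
  have hlt : ((Fin.castAdd (n - n') a : Fin (u + (n - n'))) : ℕ) < u := a.isLt
  simp only [MonoidHom.comp_apply, FreeGroup.map.of, FreeGroup.lift_apply_of, g0]
  rw [dif_pos hlt, mk_of]
  rfl

lemma key2 (hn : n' ≤ n) (hm : m' ≤ m)
    (r : Fin m → FreeGroup (Fin n)) (r' : Fin m' → FreeGroup (Fin n'))
    (hsub : ∀ j : Fin m', FreeGroup.map (Fin.castLE hn) (r' j) = r (Fin.castLE hm j))
    (s : Fin v → FreeGroup (Fin u))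
    (φ : PresentedGroup (Set.range r') ≃* PresentedGroup (Set.range s)) : (FreeGroup.lift (g0 hn hm r r' hsub s φ)).comp (f hn hm r r' hsub s φ) =
    PresentedGroup.mk (Set.range r) := by
  refine FreeGroup.ext_hom _ _ fun i => ?_
  simp only [MonoidHom.comp_apply, f, FreeGroup.lift_apply_of, mk_of]
  by_cases h : (i : ℕ) < n'
  · rw [dif_pos h]
    have h3 := DFunLike.congr_fun (key2a hn hm r r' hsub s φ) (wi hn hm r r' hsub s φ ⟨(i : ℕ), h⟩)
    simp only [MonoidHom.comp_apply] at h3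
    rw [h3, wi_spec hn hm r r' hsub s φ _, MulEquiv.coe_toMonoidHom, MulEquiv.symm_apply_apply]
    have h4 : ι hn hm r r' hsub s φ (PresentedGroup.of ⟨(i : ℕ), h⟩) =
        PresentedGroup.of (Fin.castLE hn ⟨(i : ℕ), h⟩) := PresentedGroup.toGroup.of _
    rw [h4]
    exact congrArg PresentedGroup.of (Fin.ext rfl)
  · rw [dif_neg h, FreeGroup.lift_apply_of, g0, dif_neg (by simp)]
    congr 1
    exact Fin.ext (by first | omega | (simp; omega))

noncomputable def Ψ (hn : n' ≤ n) (hm : m' ≤ m)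
    (r : Fin m → FreeGroup (Fin n)) (r' : Fin m' → FreeGroup (Fin n'))
    (hsub : ∀ j : Fin m', FreeGroup.map (Fin.castLE hn) (r' j) = r (Fin.castLE hm j))
    (s : Fin v → FreeGroup (Fin u))
    (φ : PresentedGroup (Set.range r') ≃* PresentedGroup (Set.range s)) :
    PresentedGroup (Set.range (t hn hm r r' hsub s φ)) →* PresentedGroup (Set.range r) :=
  PresentedGroup.toGroup (f := g0 hn hm r r' hsub s φ) (by
    rintro _ ⟨j, rfl⟩
    by_cases h : (j : ℕ) < v
    · have ht : t hn hm r r' hsub s φ j = FreeGroup.map (Fin.castAdd (n - n')) (s ⟨(j : ℕ), h⟩) :=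
        dif_pos h
      rw [ht]
      have h3 := DFunLike.congr_fun (key2a hn hm r r' hsub s φ) (s ⟨(j : ℕ), h⟩)
      simp only [MonoidHom.comp_apply] at h3
      rw [h3, mk_rel_eq_one (Set.mem_range_self _), map_one, map_one]
    · have ht : t hn hm r r' hsub s φ j =
          f hn hm r r' hsub s φ (r ⟨m' + ((j : ℕ) - v), by have := j.isLt; omega⟩) := dif_neg h
      rw [ht]
      have h3 := DFunLike.congr_fun (key2 hn hm r r' hsub s φ)
        (r ⟨m' + ((j : ℕ) - v), by have := j.isLt; omega⟩)
      simp only [MonoidHom.comp_apply] at h3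
      rw [h3]
      exact mk_rel_eq_one ⟨_, rfl⟩)

lemma psi_mk (hn : n' ≤ n) (hm : m' ≤ m)
    (r : Fin m → FreeGroup (Fin n)) (r' : Fin m' → FreeGroup (Fin n'))
    (hsub : ∀ j : Fin m', FreeGroup.map (Fin.castLE hn) (r' j) = r (Fin.castLE hm j))
    (s : Fin v → FreeGroup (Fin u))
    (φ : PresentedGroup (Set.range r') ≃* PresentedGroup (Set.range s)) (x : FreeGroup (Fin (u + (n - n')))) :
    Ψ hn hm r r' hsub s φ (PresentedGroup.mk _ x) = FreeGroup.lift (g0 hn hm r r' hsub s φ) x := by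
  have h1 : (Ψ hn hm r r' hsub s φ).comp (PresentedGroup.mk _) =
      FreeGroup.lift (g0 hn hm r r' hsub s φ) :=
    FreeGroup.ext_hom _ _ fun a => by
      simp [mk_of, Ψ, PresentedGroup.toGroup.of]
  exact DFunLike.congr_fun h1 x

lemma key3 (hn : n' ≤ n) (hm : m' ≤ m)
    (r : Fin m → FreeGroup (Fin n)) (r' : Fin m' → FreeGroup (Fin n'))
    (hsub : ∀ j : Fin m', FreeGroup.map (Fin.castLE hn) (r' j) = r (Fin.castLE hm j))
    (s : Fin v → FreeGroup (Fin u))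
    (φ : PresentedGroup (Set.range r') ≃* PresentedGroup (Set.range s)) : (Φ hn hm r r' hsub s φ).comp (ι hn hm r r' hsub s φ) =
    (χ hn hm r r' hsub s φ).comp φ.toMonoidHom := by
  refine PresentedGroup.ext fun i => ?_
  have h1 : ι hn hm r r' hsub s φ (PresentedGroup.of i) =
      PresentedGroup.of (Fin.castLE hn i) := PresentedGroup.toGroup.of _
  simp only [MonoidHom.comp_apply, h1]
  rw [show (PresentedGroup.of (Fin.castLE hn i) : PresentedGroup (Set.range r)) =
    PresentedGroup.mk _ (FreeGroup.map (Fin.castLE hn) (FreeGroup.of i)) from rfl]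
  rw [phi_mk]
  have h3 := DFunLike.congr_fun (key1 hn hm r r' hsub s φ) (FreeGroup.of i)
  simp only [MonoidHom.comp_apply] at h3
  rw [h3, mk_of]

theorem main (hn : n' ≤ n) (hm : m' ≤ m)
    (r : Fin m → FreeGroup (Fin n)) (r' : Fin m' → FreeGroup (Fin n'))
    (hsub : ∀ j : Fin m', FreeGroup.map (Fin.castLE hn) (r' j) = r (Fin.castLE hm j))
    (s : Fin v → FreeGroup (Fin u))
    (φ : PresentedGroup (Set.range r') ≃* PresentedGroup (Set.range s)) : Nonempty (PresentedGroup (Set.range r) ≃*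
    PresentedGroup (Set.range (t hn hm r r' hsub s φ))) := by
  refine ⟨MonoidHom.toMulEquiv (Φ hn hm r r' hsub s φ) (Ψ hn hm r r' hsub s φ) ?_ ?_⟩
  · refine PresentedGroup.ext fun i => ?_
    simp only [MonoidHom.comp_apply, MonoidHom.id_apply]
    rw [show (PresentedGroup.of i : PresentedGroup (Set.range r)) =
      PresentedGroup.mk _ (FreeGroup.of i) from rfl, phi_mk, psi_mk]
    exact DFunLike.congr_fun (key2 hn hm r r' hsub s φ) (FreeGroup.of i)
  · refine PresentedGroup.ext fun a => ?_
    simp only [MonoidHom.comp_apply, MonoidHom.id_apply]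
    have hΨ : Ψ hn hm r r' hsub s φ (PresentedGroup.of a) = g0 hn hm r r' hsub s φ a :=
      PresentedGroup.toGroup.of _
    rw [hΨ]
    by_cases h : (a : ℕ) < u
    · rw [g0, dif_pos h]
      have h3 := DFunLike.congr_fun (key3 hn hm r r' hsub s φ)
        (φ.symm (PresentedGroup.of ⟨(a : ℕ), h⟩))
      simp only [MonoidHom.comp_apply, MulEquiv.coe_toMonoidHom,
        MulEquiv.apply_symm_apply] at h3
      rw [h3]
      have hχ : χ hn hm r r' hsub s φ (PresentedGroup.of ⟨(a : ℕ), h⟩) =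
          PresentedGroup.of (Fin.castAdd (n - n') ⟨(a : ℕ), h⟩) := PresentedGroup.toGroup.of _
      rw [hχ]
      exact congrArg PresentedGroup.of (Fin.ext rfl)
    · rw [g0, dif_neg h]
      rw [show (PresentedGroup.of (⟨n' + ((a : ℕ) - u), by have := a.isLt; omega⟩ : Fin n) :
        PresentedGroup (Set.range r)) = PresentedGroup.mk _ (FreeGroup.of _) from rfl, phi_mk]
      simp only [f, FreeGroup.lift_apply_of]
      rw [dif_neg (by first | omega | (simp; omega)), mk_of]
      congr 1
      exact Fin.ext (by first | omega | (simp; omega))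

end

end SubpresAux

/-- **Lemma 4.14 (main part).**  Let `G` be presented by
`P = ⟨x₁,…,xₙ | r₁,…,r_m⟩` and let `P' = ⟨x₁,…,x_{n'} | r₁,…,r_{m'}⟩` be a
sub-presentation (the first `m'` relators are words in the first `n'` generators),
presenting a group `G'`.  Then for any finite presentation
`P'' = ⟨y₁,…,y_u | s₁,…,s_v⟩` of `G'`, the group `G` admits a finite presentation
with `u + (n - n')` generators and `v + (m - m')` relators. -/
theorem subpresentation_replacement
    (n m n' m' : ℕ) (hn : n' ≤ n) (hm : m' ≤ m)
    (r : Fin m → FreeGroup (Fin n)) (r' : Fin m' → FreeGroup (Fin n'))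
    (hsub : ∀ j : Fin m',
      FreeGroup.map (Fin.castLE hn) (r' j) = r (Fin.castLE hm j))
    (u v : ℕ) (s : Fin v → FreeGroup (Fin u))
    (hP'' : Nonempty (PresentedGroup (Set.range r') ≃* PresentedGroup (Set.range s))) :
    ∃ t : Fin (v + (m - m')) → FreeGroup (Fin (u + (n - n'))),
      Nonempty (PresentedGroup (Set.range r) ≃* PresentedGroup (Set.range t)) := by
  obtain ⟨φ⟩ := hP''
  exact ⟨SubpresAux.t hn hm r r' hsub s φ, SubpresAux.main hn hm r r' hsub s φ⟩
end

section
/- With notation as in Lemma 4.14: if the presentation P of G realizes the minimal value of (number of relators) − (number of generators) + 1 among all finite presentations of G (i.e. 1 − def(G) = m − n + 1), then the sub-presentation P' realizes 1 − def(G') = m' − n' + 1 for the group G' it presents. -/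
/-- **Lemma 4.14 ("in particular" part).**  With `P = ⟨x₁,…,xₙ | r₁,…,r_m⟩` a
presentation of `G` and `P' = ⟨x₁,…,x_{n'} | r₁,…,r_{m'}⟩` a sub-presentation
presenting `G'`: if `P` realizes the minimal value of
(number of relators) − (number of generators) + 1 among all finite presentations of
`G` (i.e. `1 - def(G) = m - n + 1`), then `P'` realizes
`1 - def(G') = m' - n' + 1` for `G'`. -/
theorem subpresentation_realizes_deficiency
    (n m n' m' : ℕ) (hn : n' ≤ n) (hm : m' ≤ m)
    (r : Fin m → FreeGroup (Fin n)) (r' : Fin m' → FreeGroup (Fin n'))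
    (hsub : ∀ j : Fin m',
      FreeGroup.map (Fin.castLE hn) (r' j) = r (Fin.castLE hm j))
    (hmin : ∀ (d k : ℕ) (t : Fin k → FreeGroup (Fin d)),
      Nonempty (PresentedGroup (Set.range r) ≃* PresentedGroup (Set.range t)) →
      (m : ℤ) - n ≤ (k : ℤ) - d) :
    ∀ (d k : ℕ) (t : Fin k → FreeGroup (Fin d)),
      Nonempty (PresentedGroup (Set.range r') ≃* PresentedGroup (Set.range t)) →
      (m' : ℤ) - n' ≤ (k : ℤ) - d := by
  classical
  rintro d k t ⟨e⟩
  -- choose words representing the images of the generators under `e` and `e.symm`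
  choose w hw using fun i : Fin n' =>
    PresentedGroup.mk_surjective (Set.range t)
      (e (PresentedGroup.mk (Set.range r') (FreeGroup.of i)))
  choose v hv using fun j : Fin d =>
    PresentedGroup.mk_surjective (Set.range r')
      (e.symm (PresentedGroup.mk (Set.range t) (FreeGroup.of j)))
  -- abbreviations
  set mkR := PresentedGroup.mk (Set.range r) with hmkR
  set mkR' := PresentedGroup.mk (Set.range r') with hmkR'
  set mkT := PresentedGroup.mk (Set.range t) with hmkT
  -- new generator substitution maps
  set φ0 : Fin n → FreeGroup (Fin (d + (n - n'))) := fun i =>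
    if h : (i : ℕ) < n' then FreeGroup.map (Fin.castAdd (n - n')) (w ⟨i, h⟩)
    else FreeGroup.of (Fin.natAdd d ⟨(i : ℕ) - n', by omega⟩) with hφ0
  set χ0 : Fin (d + (n - n')) → FreeGroup (Fin n) := fun a =>
    Fin.addCases (motive := fun _ => FreeGroup (Fin n))
      (fun j => FreeGroup.map (Fin.castLE hn) (v j))
      (fun i => FreeGroup.of ⟨n' + (i : ℕ), by omega⟩) a with hχ0
  -- the new relators
  set t'' : Fin (k + (m - m')) → FreeGroup (Fin (d + (n - n'))) := fun b =>
    Fin.addCases (motive := fun _ => FreeGroup (Fin (d + (n - n'))))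
      (fun a => FreeGroup.map (Fin.castAdd (n - n')) (t a))
      (fun j => FreeGroup.lift φ0 (r ⟨m' + (j : ℕ), by omega⟩)) b with ht''
  set mkT'' := PresentedGroup.mk (Set.range t'') with hmkT''
  -- basic facts
  have mkR_rel : ∀ j : Fin m, mkR (r j) = 1 := fun j =>
    (QuotientGroup.eq_one_iff _).mpr
      (Subgroup.subset_normalClosure (Set.mem_range_self j))
  have mkR'_rel : ∀ j : Fin m', mkR' (r' j) = 1 := fun j =>
    (QuotientGroup.eq_one_iff _).mpr
      (Subgroup.subset_normalClosure (Set.mem_range_self j))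
  have mkT_rel : ∀ j : Fin k, mkT (t j) = 1 := fun j =>
    (QuotientGroup.eq_one_iff _).mpr
      (Subgroup.subset_normalClosure (Set.mem_range_self j))
  have mkT''_rel : ∀ b : Fin (k + (m - m')), mkT'' (t'' b) = 1 := fun b =>
    (QuotientGroup.eq_one_iff _).mpr
      (Subgroup.subset_normalClosure (Set.mem_range_self b))
  -- pointwise descriptions
  have φ0_pos : ∀ (i : Fin n) (h : (i : ℕ) < n'),
      φ0 i = FreeGroup.map (Fin.castAdd (n - n')) (w ⟨i, h⟩) := by
    intro i h; rw [hφ0]; exact dif_pos h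
  have φ0_neg : ∀ (i : Fin n) (h : ¬ (i : ℕ) < n'),
      φ0 i = FreeGroup.of (Fin.natAdd d ⟨(i : ℕ) - n', by omega⟩) := by
    intro i h; rw [hφ0]; exact dif_neg h
  have χ0_left : ∀ j : Fin d,
      χ0 (Fin.castAdd (n - n') j) = FreeGroup.map (Fin.castLE hn) (v j) := by
    intro j; rw [hχ0]; exact Fin.addCases_left j
  have χ0_right : ∀ i : Fin (n - n'),
      χ0 (Fin.natAdd d i) = FreeGroup.of ⟨n' + (i : ℕ), by omega⟩ := by
    intro i; rw [hχ0]; exact Fin.addCases_right i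
  have t''_left : ∀ a : Fin k,
      t'' (Fin.castAdd (m - m') a) = FreeGroup.map (Fin.castAdd (n - n')) (t a) := by
    intro a; rw [ht'']; exact Fin.addCases_left a
  have t''_right : ∀ j : Fin (m - m'),
      t'' (Fin.natAdd k j) = FreeGroup.lift φ0 (r ⟨m' + (j : ℕ), by omega⟩) := by
    intro j; rw [ht'']; exact Fin.addCases_right j
  -- `ψ := lift w` intertwines `e`
  have hψ : ∀ x, mkT (FreeGroup.lift w x) = e (mkR' x) := by
    intro x
    have : mkT.comp (FreeGroup.lift w) = (e : _ →* _).comp mkR' :=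
      FreeGroup.ext_hom _ _ (fun i => by simp [hw i])
    exact DFunLike.congr_fun this x
  -- `ξ := lift v` intertwines `e.symm`
  have hξ : ∀ x, mkR' (FreeGroup.lift v x) = e.symm (mkT x) := by
    intro x
    have : mkR'.comp (FreeGroup.lift v) = (e.symm : _ →* _).comp mkT :=
      FreeGroup.ext_hom _ _ (fun j => by simp [hv j])
    exact DFunLike.congr_fun this x
  -- the map `π : G' → G` induced by inclusion of generators
  have hπcond : ∀ rel ∈ Set.range r',
      FreeGroup.lift (fun i : Fin n' => mkR (FreeGroup.of (Fin.castLE hn i))) rel = 1 := by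
    rintro _ ⟨j, rfl⟩
    have hcomp : FreeGroup.lift (fun i : Fin n' => mkR (FreeGroup.of (Fin.castLE hn i)))
        = mkR.comp (FreeGroup.map (Fin.castLE hn)) :=
      FreeGroup.ext_hom _ _ (fun i => by simp)
    rw [hcomp, MonoidHom.comp_apply, hsub j]
    exact mkR_rel _
  set π : PresentedGroup (Set.range r') →* PresentedGroup (Set.range r) :=
    PresentedGroup.toGroup hπcond with hπdef
  have hπ : ∀ x, π (mkR' x) = mkR (FreeGroup.map (Fin.castLE hn) x) := by
    intro x
    have : π.comp mkR' = mkR.comp (FreeGroup.map (Fin.castLE hn)) :=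
      FreeGroup.ext_hom _ _ (fun i => by
        simp only [MonoidHom.comp_apply, FreeGroup.map.of]
        exact PresentedGroup.toGroup.of hπcond)
    exact DFunLike.congr_fun this x
  -- the map `ρ : ⟨t⟩ → ⟨t''⟩` induced by inclusion of generators
  have hρcond : ∀ rel ∈ Set.range t,
      FreeGroup.lift (fun a : Fin d => mkT'' (FreeGroup.of (Fin.castAdd (n - n') a))) rel = 1 := by
    rintro _ ⟨b, rfl⟩
    have hcomp : FreeGroup.lift (fun a : Fin d => mkT'' (FreeGroup.of (Fin.castAdd (n - n') a)))
        = mkT''.comp (FreeGroup.map (Fin.castAdd (n - n'))) :=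
      FreeGroup.ext_hom _ _ (fun a => by simp)
    rw [hcomp, MonoidHom.comp_apply]
    have : FreeGroup.map (Fin.castAdd (n - n')) (t b) = t'' (Fin.castAdd (m - m') b) := by
      simp [ht'']
    rw [this]
    exact mkT''_rel _
  set ρ : PresentedGroup (Set.range t) →* PresentedGroup (Set.range t'') :=
    PresentedGroup.toGroup hρcond with hρdef
  have hρ : ∀ x, ρ (mkT x) = mkT'' (FreeGroup.map (Fin.castAdd (n - n')) x) := by
    intro x
    have : ρ.comp mkT = mkT''.comp (FreeGroup.map (Fin.castAdd (n - n'))) :=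
      FreeGroup.ext_hom _ _ (fun a => by
        simp only [MonoidHom.comp_apply, FreeGroup.map.of]
        exact PresentedGroup.toGroup.of hρcond)
    exact DFunLike.congr_fun this x
  -- `φ ∘ ι = map castAdd ∘ ψ`
  have hφι : ∀ x : FreeGroup (Fin n'),
      FreeGroup.lift φ0 (FreeGroup.map (Fin.castLE hn) x)
        = FreeGroup.map (Fin.castAdd (n - n')) (FreeGroup.lift w x) := by
    intro x
    have : (FreeGroup.lift φ0).comp (FreeGroup.map (Fin.castLE hn))
        = (FreeGroup.map (Fin.castAdd (n - n'))).comp (FreeGroup.lift w) := by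
      refine FreeGroup.ext_hom _ _ (fun i => ?_)
      have hi : ((Fin.castLE hn i : Fin n) : ℕ) < n' := i.isLt
      simp only [MonoidHom.comp_apply, FreeGroup.map.of, FreeGroup.lift_apply_of, φ0_pos _ hi]
      exact congrArg _ (congrArg w (Fin.ext rfl))
    exact DFunLike.congr_fun this x
  -- `χ ∘ map castAdd = ι ∘ ξ`
  have hχcast : ∀ x : FreeGroup (Fin d),
      FreeGroup.lift χ0 (FreeGroup.map (Fin.castAdd (n - n')) x)
        = FreeGroup.map (Fin.castLE hn) (FreeGroup.lift v x) := by
    intro x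
    have : (FreeGroup.lift χ0).comp (FreeGroup.map (Fin.castAdd (n - n')))
        = (FreeGroup.map (Fin.castLE hn)).comp (FreeGroup.lift v) := by
      refine FreeGroup.ext_hom _ _ (fun j => ?_)
      simp only [MonoidHom.comp_apply, FreeGroup.map.of, FreeGroup.lift_apply_of, χ0_left]
    exact DFunLike.congr_fun this x
  -- round trip on `G`: `mkR ∘ χ ∘ φ = mkR`
  have hRT : ∀ x : FreeGroup (Fin n),
      mkR (FreeGroup.lift χ0 (FreeGroup.lift φ0 x)) = mkR x := by
    intro x
    have : (mkR.comp (FreeGroup.lift χ0)).comp (FreeGroup.lift φ0) = mkR := by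
      refine FreeGroup.ext_hom _ _ (fun i => ?_)
      simp only [MonoidHom.comp_apply, FreeGroup.lift_apply_of]
      by_cases h : (i : ℕ) < n'
      · rw [φ0_pos _ h, hχcast, ← hπ, hξ, hw, MulEquiv.symm_apply_apply, hπ,
          FreeGroup.map.of]
        exact congrArg mkR (congrArg FreeGroup.of (Fin.ext rfl))
      · rw [φ0_neg _ h, FreeGroup.lift_apply_of, χ0_right]
        exact congrArg mkR (congrArg FreeGroup.of (Fin.ext (by simp; omega)))
    exact DFunLike.congr_fun this x
  -- round trip on the new presentation: `mkT'' ∘ φ ∘ χ = mkT''`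
  have hRT' : ∀ x : FreeGroup (Fin (d + (n - n'))),
      mkT'' (FreeGroup.lift φ0 (FreeGroup.lift χ0 x)) = mkT'' x := by
    intro x
    have : (mkT''.comp (FreeGroup.lift φ0)).comp (FreeGroup.lift χ0) = mkT'' := by
      refine FreeGroup.ext_hom _ _ (fun a => ?_)
      simp only [MonoidHom.comp_apply, FreeGroup.lift_apply_of]
      refine Fin.addCases (fun j => ?_) (fun i => ?_) a
      · rw [χ0_left, hφι, ← hρ, hψ, hv, MulEquiv.apply_symm_apply, hρ,
          FreeGroup.map.of]
      · rw [χ0_right, FreeGroup.lift_apply_of]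
        have h : ¬ ((⟨n' + (i : ℕ), by omega⟩ : Fin n) : ℕ) < n' := by simp
        rw [φ0_neg _ h]
        refine congrArg mkT'' (congrArg FreeGroup.of (congrArg (Fin.natAdd d) (Fin.ext ?_)))
        simp
    exact DFunLike.congr_fun this x
  -- forward homomorphism `G → ⟨t''⟩`
  have hfcond : ∀ rel ∈ Set.range r,
      FreeGroup.lift (fun i : Fin n => mkT'' (φ0 i)) rel = 1 := by
    rintro _ ⟨j, rfl⟩
    have hcomp : FreeGroup.lift (fun i : Fin n => mkT'' (φ0 i))
        = mkT''.comp (FreeGroup.lift φ0) :=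
      FreeGroup.ext_hom _ _ (fun i => by simp)
    rw [hcomp, MonoidHom.comp_apply]
    by_cases h : (j : ℕ) < m'
    · have hj : r j = FreeGroup.map (Fin.castLE hn) (r' ⟨j, h⟩) := by
        rw [hsub ⟨j, h⟩]; exact congrArg r (Fin.ext rfl)
      rw [hj, hφι, ← hρ, hψ, mkR'_rel]
      simp
    · have hj : r j = r ⟨m' + ((j : ℕ) - m'), by omega⟩ := by
        congr 1; exact Fin.ext (by simp; omega)
      rw [hj]
      rw [← t''_right ⟨(j : ℕ) - m', by omega⟩]
      exact mkT''_rel _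
  set f : PresentedGroup (Set.range r) →* PresentedGroup (Set.range t'') :=
    PresentedGroup.toGroup hfcond with hfdef
  have hf : ∀ x, f (mkR x) = mkT'' (FreeGroup.lift φ0 x) := by
    intro x
    have : f.comp mkR = mkT''.comp (FreeGroup.lift φ0) :=
      FreeGroup.ext_hom _ _ (fun i => by
        simp only [MonoidHom.comp_apply, FreeGroup.lift_apply_of]
        exact PresentedGroup.toGroup.of hfcond)
    exact DFunLike.congr_fun this x
  -- backward homomorphism `⟨t''⟩ → G`
  have hgcond : ∀ rel ∈ Set.range t'',
      FreeGroup.lift (fun a : Fin (d + (n - n')) => mkR (χ0 a)) rel = 1 := by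
    rintro _ ⟨b, rfl⟩
    have hcomp : FreeGroup.lift (fun a : Fin (d + (n - n')) => mkR (χ0 a))
        = mkR.comp (FreeGroup.lift χ0) :=
      FreeGroup.ext_hom _ _ (fun a => by simp)
    rw [hcomp, MonoidHom.comp_apply]
    refine Fin.addCases (fun b₁ => ?_) (fun b₂ => ?_) b
    · rw [t''_left, hχcast, ← hπ, hξ, mkT_rel]
      simp
    · rw [t''_right, hRT]
      exact mkR_rel _
  set g : PresentedGroup (Set.range t'') →* PresentedGroup (Set.range r) :=
    PresentedGroup.toGroup hgcond with hgdef
  have hg : ∀ x, g (mkT'' x) = mkR (FreeGroup.lift χ0 x) := by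
    intro x
    have : g.comp mkT'' = mkR.comp (FreeGroup.lift χ0) :=
      FreeGroup.ext_hom _ _ (fun a => by
        simp only [MonoidHom.comp_apply, FreeGroup.lift_apply_of]
        exact PresentedGroup.toGroup.of hgcond)
    exact DFunLike.congr_fun this x
  -- the two maps are inverse to each other
  have hgf : g.comp f = MonoidHom.id _ := by
    ext i
    show g (f (mkR (FreeGroup.of i))) = mkR (FreeGroup.of i)
    rw [hf, hg, hRT]
  have hfg : f.comp g = MonoidHom.id _ := by
    ext a
    show f (g (mkT'' (FreeGroup.of a))) = mkT'' (FreeGroup.of a)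
    rw [hg, hf, hRT']
  have iso : PresentedGroup (Set.range r) ≃* PresentedGroup (Set.range t'') :=
    MonoidHom.toMulEquiv f g hgf hfg
  have := hmin (d + (n - n')) (k + (m - m')) t'' ⟨iso⟩
  push_cast at this ⊢
  omega
end

section
/- Let G be a finite group. Then μ_2(G) is finite and is realized by some algebraic 2-complex: there exists an exact sequence F_2 → F_1 → F_0 → ℤ → 0 of finitely generated free ℤG-modules with f_2 − f_1 + f_0 = μ_2(G); equivalently, the infimum defining μ_2(G) is attained and μ_2(G) > −∞. -/
/-- The integral group ring `ℤG`. -/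
abbrev ZG (G : Type*) [Group G] := MonoidAlgebra ℤ G

/-- `ℤ` as the trivial `ℤG`-module. -/
abbrev TrivInt (G : Type*) [Group G] := (Representation.trivial ℤ (G := G) (V := ℤ)).asModule

/-- An algebraic 2-complex over `ℤG`: an exact sequence
`F₂ → F₁ → F₀ → ℤ → 0` of finitely generated free `ℤG`-modules
(in standard form, `Fᵢ = (ℤG)^{fᵢ}`), with `ℤ` the trivial module. -/
structure AlgTwoComplex (G : Type*) [Group G] where
  f0 : ℕ
  f1 : ℕ
  f2 : ℕ
  d1 : (Fin f2 → ZG G) →ₗ[ZG G] (Fin f1 → ZG G)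
  d0 : (Fin f1 → ZG G) →ₗ[ZG G] (Fin f0 → ZG G)
  ε : (Fin f0 → ZG G) →ₗ[ZG G] TrivInt G
  surj : Function.Surjective ε
  exact0 : LinearMap.range d0 = LinearMap.ker ε
  exact1 : LinearMap.range d1 = LinearMap.ker d0

/-- The partial Euler characteristic `μ₂(F) = f₂ - f₁ + f₀` of an algebraic 2-complex. -/
def AlgTwoComplex.mu2 {G : Type*} [Group G] (F : AlgTwoComplex G) : ℤ :=
  (F.f2 : ℤ) - F.f1 + F.f0

/-- The set of partial Euler characteristics of algebraic 2-complexes over `ℤG`;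
`μ₂(G)` is its infimum. -/
def mu2Set (G : Type*) [Group G] : Set ℤ := {z | ∃ F : AlgTwoComplex G, F.mu2 = z}

/-- `G` admits a finite presentation with `d` generators and `k` relators. -/
def Presents (G : Type*) [Group G] (d k : ℕ) : Prop :=
  ∃ t : Fin k → FreeGroup (Fin d), Nonempty (G ≃* PresentedGroup (Set.range t))

/-- The set of values `d - k` over finite presentations of `G`;
the deficiency `def(G)` is its supremum. -/
def defSet (G : Type*) [Group G] : Set ℤ :=
  {z | ∃ d k : ℕ, Presents G d k ∧ z = (d : ℤ) - k}

/-!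
Forgetting to `ℤ`, the group ring of a finite group `G` is free of rank `|G|`, so rank-nullity
along `F₂ → F₁ → F₀ → ℤ → 0` gives `|G| · (f₂ - f₁ + f₀) ≥ rank_ℤ ℤ = 1`. Every value of `μ₂`
is therefore at least `1`, and an infimum of a nonempty set of integers bounded below is attained.
Algebraic 2-complexes exist because `ℤG` is Noetherian: kernels of maps out of finitely generated
free modules are again finitely generated.
-/

open Module LinearMap

universe u

section RankNullity

variable {R : Type*} [Ring R] [StrongRankCondition R] [HasRankNullity.{u} R]

theorem LinearMap.finrank_range_add_finrank_ker' {M : Type u} {N : Type*} [AddCommGroup M]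
    [Module R M] [Module.Finite R M] [AddCommGroup N] [Module R N] (f : M →ₗ[R] N) :
    finrank R (range f) + finrank R (ker f) = finrank R M :=
  f.quotKerEquivRange.finrank_eq ▸ (ker f).finrank_quotient_add_finrank

theorem finrank_le_alternating_sum_of_exact {F₂ F₁ F₀ : Type u} {N : Type*}
    [AddCommGroup F₂] [Module R F₂] [Module.Finite R F₂]
    [AddCommGroup F₁] [Module R F₁] [Module.Finite R F₁]
    [AddCommGroup F₀] [Module R F₀] [Module.Finite R F₀] [AddCommGroup N] [Module R N]
    {d₁ : F₂ →ₗ[R] F₁} {d₀ : F₁ →ₗ[R] F₀} {ε : F₀ →ₗ[R] N} (hε : Function.Surjective ε)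
    (h₀ : range d₀ = ker ε) (h₁ : range d₁ = ker d₀) :
    (finrank R N : ℤ) ≤ finrank R F₂ - finrank R F₁ + finrank R F₀ := by
  have rank_nullity₁ := d₁.finrank_range_add_finrank_ker'
  have rank_nullity₀ := d₀.finrank_range_add_finrank_ker'
  have rank_nullity_ε := ε.finrank_range_add_finrank_ker'
  rw [h₁] at rank_nullity₁
  rw [h₀] at rank_nullity₀
  rw [range_eq_top.2 hε, finrank_top] at rank_nullity_ε
  omega

end RankNullity

theorem LinearMap.exists_fin_range_eq_ker {R M : Type*} [Ring R] [IsNoetherianRing R]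
    [AddCommGroup M] [Module R M] {n : ℕ} (f : (Fin n → R) →ₗ[R] M) :
    ∃ (m : ℕ) (g : (Fin m → R) →ₗ[R] (Fin n → R)), range g = ker f := by
  obtain ⟨m, g, hg⟩ := Module.Finite.exists_fin' R (ker f)
  refine ⟨m, (ker f).subtype ∘ₗ g, ?_⟩
  rw [range_comp, range_eq_top.2 hg, Submodule.map_top, Submodule.range_subtype]

namespace AlgTwoComplex

variable {G : Type*} [Group G]

-- `Module ℤ (TrivInt G)` is `AddCommGroup.toIntModule`, hence the detour through `≃+`.
def trivIntEquiv : TrivInt G ≃ₗ[ℤ] ℤ :=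
  (Representation.trivial ℤ G ℤ).asModuleEquiv.toAddEquiv.toIntLinearEquiv

instance : Module.Finite ℤ (TrivInt G) := .equiv trivIntEquiv.symm

theorem finrank_trivInt : finrank ℤ (TrivInt G) = 1 := by
  rw [trivIntEquiv.finrank_eq, finrank_self]

variable [Finite G]

instance : IsNoetherianRing (ZG G) := IsNoetherianRing.of_finite ℤ (ZG G)

theorem finrank_int_zg : finrank ℤ (ZG G) = Nat.card G := by
  have := Fintype.ofFinite G
  rw [(MonoidAlgebra.coeffLinearEquiv ℤ).finrank_eq, finrank_finsupp_self,
    Nat.card_eq_fintype_card]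

theorem finrank_int_fin_zg (f : ℕ) : finrank ℤ (Fin f → ZG G) = f * Nat.card G := by
  simp [finrank_pi_fintype, finrank_int_zg]

theorem nonempty : Nonempty (AlgTwoComplex G) := by
  have : Module.Finite (ZG G) (TrivInt G) := .of_restrictScalars_finite ℤ _ _
  obtain ⟨f₀, ε, hε⟩ := Module.Finite.exists_fin' (ZG G) (TrivInt G)
  obtain ⟨f₁, d₀, h₀⟩ := ε.exists_fin_range_eq_ker
  obtain ⟨f₂, d₁, h₁⟩ := d₀.exists_fin_range_eq_ker
  exact ⟨⟨f₀, f₁, f₂, d₁, d₀, ε, hε, h₀, h₁⟩⟩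

theorem one_le_mu2 (F : AlgTwoComplex G) : 1 ≤ F.mu2 := by
  have h := finrank_le_alternating_sum_of_exact (R := ℤ) (d₁ := F.d1.restrictScalars ℤ)
    (d₀ := F.d0.restrictScalars ℤ) (ε := F.ε.restrictScalars ℤ) F.surj
    (by rw [range_restrictScalars, ker_restrictScalars, F.exact0])
    (by rw [range_restrictScalars, ker_restrictScalars, F.exact1])
  simp only [finrank_trivInt, finrank_int_fin_zg, Nat.cast_mul, Nat.cast_one] at h
  have hμ : 1 ≤ F.mu2 * Nat.card G := by rw [mu2]; linarith
  have : 0 < F.mu2 := pos_of_mul_pos_left (one_pos.trans_le hμ) (Nat.cast_nonneg _)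
  omega

end AlgTwoComplex

/-- **Lemma 4.1 for finite groups.**  For a finite group `G`, `μ₂(G)` is finite
(`μ₂(G) > -∞`, i.e. the set of partial Euler characteristics of algebraic
2-complexes is nonempty and bounded below) and the infimum is attained by some
algebraic 2-complex. -/
theorem mu2_finite_and_realized
    (G : Type*) [Group G] [Finite G] :
    (mu2Set G).Nonempty ∧ BddBelow (mu2Set G) ∧
      ∃ F : AlgTwoComplex G, F.mu2 = sInf (mu2Set G) := by
  obtain ⟨F⟩ := AlgTwoComplex.nonempty (G := G)
  have hne : (mu2Set G).Nonempty := ⟨F.mu2, F, rfl⟩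
  have hbdd : BddBelow (mu2Set G) := ⟨1, by rintro _ ⟨F, rfl⟩; exact F.one_le_mu2⟩
  exact ⟨hne, hbdd, Int.csInf_mem hne hbdd⟩
end
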